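/- arXiv:math/0701155 — 3 statements merged into one kernel-verified Lean document; each statement's English description precedes it below -/
import Mathlib

section
/- There exists no proper biharmonic hypersurface in the hyperbolic space H^{m+1} with constant mean curvature. In particular, if a hypersurface M of H^{m+1} is biharmonic with constant mean curvature, then it is minimal. -/
/-- There is no proper biharmonic hypersurface with constant mean curvature
in the hyperbolic space `H^{m+1}`: if a hypersurface `M ⊂ H^{m+1}` (curvature `c = -1`)
with mean curvature function `f` is biharmonic (so `Δf = (-m - |A|²) f`, by the
biharmonicity characterization) and has constant mean curvature (so `Δf = 0`), then it
is minimal, i.e. `f ≡ 0`. -/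
theorem stmt_5 (M : Type*) (m : ℕ) (hm : 1 ≤ m)
    (f Δf Anorm2 : M → ℝ)
    (hA : ∀ x, 0 ≤ Anorm2 x)
    (hbih : ∀ x, Δf x = (-(m : ℝ) - Anorm2 x) * f x)
    (hconst : ∀ x y, f x = f y)
    (hΔconst : (∀ x y, f x = f y) → ∀ x, Δf x = 0) :
    ∀ x, f x = 0 := by
  intro x
  have h0 := hΔconst hconst x
  have h := hbih x
  rw [h0] at h
  have hne : (-(m : ℝ) - Anorm2 x) ≠ 0 := by
    have : (1:ℝ) ≤ m := by exact_mod_cast hm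
    have := hA x
    nlinarith
  exact (mul_eq_zero.mp h.symm).resolve_left hne
end

section
/- Let M be a proper biharmonic hypersurface of S^{m+1} with constant mean curvature |H|^2 = k. Then M has constant scalar curvature s = m^2(1+k) − 2m. -/
/-- Let `M` be a proper biharmonic hypersurface of `S^{m+1}` with constant
mean curvature `|H|² = k` (so the mean curvature function `f` satisfies `f² = k ≠ 0`,
biharmonicity gives `Δf = (m - |A|²) f` and `Δf = 0` by constancy).  The Gauss equation
gives the scalar curvature `s = m(m-1) + m²|H|² - |A|²`.  Then `M` has constant scalar
curvature `s = m²(1+k) - 2m`. -/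
theorem stmt_7 (M : Type*) (m : ℕ) (hm : 1 ≤ m)
    (f Δf Anorm2 s : M → ℝ) (k : ℝ) (hk : 0 < k)
    (hconst : ∀ x, (f x) ^ 2 = k)
    (hfconst : ∀ x y, f x = f y)
    (hbih : ∀ x, Δf x = ((m : ℝ) - Anorm2 x) * f x)
    (hΔconst : (∀ x y, f x = f y) → ∀ x, Δf x = 0)
    (hGauss : ∀ x, s x = (m : ℝ) * ((m : ℝ) - 1) + (m : ℝ) ^ 2 * k - Anorm2 x) :
    ∀ x, s x = (m : ℝ) ^ 2 * (1 + k) - 2 * (m : ℝ) := by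
  intro x
  have hΔ := hΔconst hfconst x
  have hf : f x ≠ 0 := by
    intro h
    have := hconst x
    rw [h] at this
    simp at this
    exact hk.ne' this.symm
  have hA : Anorm2 x = m := by
    have := (hbih x).symm.trans hΔ
    rcases mul_eq_zero.mp this with h | h
    · linarith
    · exact absurd h hf
  rw [hGauss x, hA]; ring
end

section
/- A compact submanifold M^m of S^n with constant mean curvature |H|^2 = k ∈ (0,1) that is proper biharmonic satisfies the fourth-order equation ΔΔH^0 − 2m ΔH^0 − m^2(k−1) H^0 = 0, where H^0 is the mean curvature vector of M in ℝ^{n+1}. -/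
/-- A compact submanifold `M^m ⊂ S^n` with constant mean curvature
`|H|² = k ∈ (0,1)` which is proper biharmonic satisfies
`ΔΔH⁰ - 2mΔH⁰ - m²(k-1)H⁰ = 0`, where `H⁰` is the mean curvature vector of `M` in
`ℝ^{n+1}`, `φ` the position vector.  Biharmonicity in `S^n` is the equation
`ΔH⁰ - 2mH⁰ + m(k-1)φ = 0`, and `Δφ = -mH⁰` (with `Δ` the positive rough
Laplacian on `ℝ^{n+1}`-valued maps). -/
theorem stmt_16 (M : Type*) [TopologicalSpace M] [CompactSpace M] [Nonempty M]
    (m n : ℕ) (hm : 1 ≤ m) (hmn : m ≤ n)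
    (Δ : (M → EuclideanSpace ℝ (Fin (n + 1))) →ₗ[ℝ]
      (M → EuclideanSpace ℝ (Fin (n + 1))))
    (φ H0 : M → EuclideanSpace ℝ (Fin (n + 1)))
    (k : ℝ) (hk : k ∈ Set.Ioo (0 : ℝ) 1)
    (hφ : ∀ x, ‖φ x‖ = 1)
    (hΔφ : ∀ x, (Δ φ) x = -((m : ℝ) • H0 x))
    (hbih : ∀ x, (Δ H0) x - (2 * (m : ℝ)) • H0 x + ((m : ℝ) * (k - 1)) • φ x = 0) :
    ∀ x, (Δ (Δ H0)) x - (2 * (m : ℝ)) • (Δ H0) x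
      - ((m : ℝ) ^ 2 * (k - 1)) • H0 x = 0 := by
  intro x
  have hfun : Δ H0 = (2 * (m : ℝ)) • H0 - ((m : ℝ) * (k - 1)) • φ := by
    funext y
    have := hbih y
    have h : (Δ H0) y = (2 * (m : ℝ)) • H0 y - ((m : ℝ) * (k - 1)) • φ y := by
      linear_combination (norm := module) this
    simpa using h
  have h2 : Δ (Δ H0) = (2 * (m : ℝ)) • Δ H0 - ((m : ℝ) * (k - 1)) • Δ φ := by
    conv_lhs => rw [hfun]
    rw [map_sub, map_smul, map_smul]
  have h3 := congrFun h2 x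
  simp only [Pi.sub_apply, Pi.smul_apply] at h3
  rw [h3, hΔφ x]
  have hm2 : ((m : ℝ) * (k - 1)) • -((m : ℝ) • H0 x) = -(((m : ℝ) ^ 2 * (k - 1)) • H0 x) := by
    rw [smul_neg, smul_smul]; ring_nf
  rw [hm2]
  abel
end
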